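/- There exists a constant C_Γ > 0, depending only on the Schottky data, such that for all nonempty words 𝐚, 𝐛 ∈ W° with 𝐚 ⊀ 𝐛 and 𝐛 ⊀ 𝐚 (neither is a prefix of the other), and all x ∈ I_𝐚, y ∈ I_𝐛: |x − y| ≥ C_Γ^{-1} max(|I_𝐚|, |I_𝐛|). -/

import Mathlib

open MeasureTheory Set Real Pointwise

noncomputable section

abbrev SL2 := Matrix.SpecialLinearGroup (Fin 2) ℝ

/-- The Möbius transformation of `ℝ` associated to `g ∈ SL(2,ℝ)` (junk value at the pole). -/
def mobius (g : SL2) (x : ℝ) : ℝ :=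
  (g 0 0 * x + g 0 1) / (g 1 0 * x + g 1 1)

/-- The derivative `γ'(x) = (cx+d)⁻²` of the Möbius transformation. -/
def mobiusDeriv (g : SL2) (x : ℝ) : ℝ :=
  ((g 1 0 * x + g 1 1) ^ 2)⁻¹

/-- The derivative of the Möbius transformation in the ball model,
`|γ'(x)|_B = ((1+x²)/(1+γ(x)²)) γ'(x)`. -/
def mobiusDerivB (g : SL2) (x : ℝ) : ℝ :=
  ((1 + x ^ 2) / (1 + mobius g x ^ 2)) * mobiusDeriv g x

/-- The Möbius action of `SL(2,ℝ)` on `ℝ ∪ {∞}`. -/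
def mobiusOP (g : SL2) (x : OnePoint ℝ) : OnePoint ℝ :=
  Option.elim x
    (if g 1 0 = 0 then OnePoint.infty else ((g 0 0 / g 1 0 : ℝ) : OnePoint ℝ))
    (fun y => if g 1 0 * y + g 1 1 = 0 then OnePoint.infty
      else ((mobius g y : ℝ) : OnePoint ℝ))

/-- The pole `γ⁻¹(∞) = -d/c` of `γ = [[a,b],[c,d]]`. -/
def mobiusPole (g : SL2) : ℝ := -(g 1 1) / (g 1 0)

/-- The distortion factor `α(γ, [x₀,x₁]) = log((γ⁻¹(∞) − x₁)/(γ⁻¹(∞) − x₀))`,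
with the convention `α = 0` when `γ⁻¹(∞) = ∞` (i.e. `c = 0`). -/
def alphaDist (g : SL2) (x₀ x₁ : ℝ) : ℝ :=
  if g 1 0 = 0 then 0 else Real.log ((mobiusPole g - x₁) / (mobiusPole g - x₀))

/-- The letter `ā` paired with `a` in the alphabet `{1,…,2r}` (modelled by `Fin (2r)`). -/
def bar {r : ℕ} (a : Fin (2 * r)) : Fin (2 * r) :=
  if h : (a : ℕ) < r then ⟨(a : ℕ) + r, by omega⟩
  else ⟨(a : ℕ) - r, by have := a.isLt; omega⟩

/-- Schottky data: `2r` disjoint compact intervals `I_a = [ξ₀ a, ξ₁ a]` on the real line and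
transformations `γ_a ∈ SL(2,ℝ)` with `γ_ā = γ_a⁻¹` such that `γ_a` maps the complement (in
`ℝ ∪ {∞}`) of the interior of `I_ā` onto `I_a`. -/
structure SchottkyData (r : ℕ) where
  hr : 2 ≤ r
  ξ₀ : Fin (2 * r) → ℝ
  ξ₁ : Fin (2 * r) → ℝ
  hlt : ∀ a, ξ₀ a < ξ₁ a
  hdisj : ∀ a b, a ≠ b → Disjoint (Icc (ξ₀ a) (ξ₁ a)) (Icc (ξ₀ b) (ξ₁ b))
  γ : Fin (2 * r) → SL2
  hinv : ∀ a, γ (bar a) = (γ a)⁻¹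
  hmap : ∀ a, mobiusOP (γ a) ''
      (univ \ ((fun t : ℝ => (t : OnePoint ℝ)) '' Ioo (ξ₀ (bar a)) (ξ₁ (bar a))))
      = (fun t : ℝ => (t : OnePoint ℝ)) '' Icc (ξ₀ a) (ξ₁ a)

namespace SchottkyData

variable {r : ℕ}

/-- `l` is a word: no letter is followed by its bar. -/
def IsWord (_ : SchottkyData r) (l : List (Fin (2 * r))) : Prop :=
  l.Chain' fun p q => q ≠ bar p

/-- The group element `γ_𝐚 = γ_{a_1} ⋯ γ_{a_n}` of a word. -/
def wordγ (S : SchottkyData r) (l : List (Fin (2 * r))) : SL2 :=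
  (l.map S.γ).prod

/-- The interval `I_𝐚 = γ_{𝐚'}(I_{a_n})` of a nonempty word (and `∅` for the empty word). -/
def wordI (S : SchottkyData r) (l : List (Fin (2 * r))) : Set ℝ :=
  if h : l = [] then ∅
  else mobius (S.wordγ l.dropLast) '' Icc (S.ξ₀ (l.getLast h)) (S.ξ₁ (l.getLast h))

/-- The limit set `Λ_Γ = ⋂_n ⋃_{𝐚 ∈ W_n} I_𝐚`. -/
def limitSet (S : SchottkyData r) : Set ℝ :=
  ⋂ n : ℕ, ⋃ (l : List (Fin (2 * r))) (_ : S.IsWord l ∧ l.length = n + 1), S.wordI l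

/-- `μ` is the (δ-conformal) Patterson–Sullivan measure: a Borel probability measure
supported on the limit set satisfying the equivariance property under the group
generated by the Schottky transformations. -/
def IsPS (S : SchottkyData r) (δ : ℝ) (μ : Measure ℝ) : Prop :=
  IsProbabilityMeasure μ ∧ μ S.limitSetᶜ = 0 ∧
    ∀ g ∈ Subgroup.closure (Set.range S.γ), ∀ f : ℝ → ℝ, Measurable f →
      (∃ C, ∀ x, |f x| ≤ C) →
      ∫ x, f x ∂μ = ∫ x, f (mobius g x) * mobiusDerivB g x ^ δ ∂μ

/-- The partition `Z(τ) = {𝐚 ∈ W° : |I_𝐚| ≤ τ < |I_{𝐚'}|}` (with `|I_∅| = ∞`). -/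
def Zpart (S : SchottkyData r) (τ : ℝ) : Set (List (Fin (2 * r))) :=
  {l | S.IsWord l ∧ l ≠ [] ∧ (MeasureTheory.volume (S.wordI l)).toReal ≤ τ ∧
    (l.dropLast = [] ∨ τ < (MeasureTheory.volume (S.wordI l.dropLast)).toReal)}

end SchottkyData

/-- The length `|I|` of an interval `I ⊂ ℝ`. -/
def ivlen (I : Set ℝ) : ℝ := (MeasureTheory.volume I).toReal

/-- `𝐚 ⇝ 𝐛` : the last letter of `𝐚` equals the first letter of `𝐛`. -/
def chn {X : Type*} (l m : List X) : Prop :=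
  ∃ (h1 : l ≠ []) (h2 : m ≠ []), l.getLast h1 = m.head h2

/-- The center of an interval. -/
def ctr (I : Set ℝ) : ℝ := (sInf I + sSup I) / 2

end

noncomputable section

open MeasureTheory Set Real

/-!
Split the two words at their longest common prefix `𝐜`, so that they continue with distinct
letters `a ≠ b`. Then `I_𝐚 ⊆ γ_𝐜(I_a)`, `I_𝐛 ⊆ γ_𝐜(I_b)`, and `I_a`, `I_b` are at distance
at least some `δ > 0`. Since `γ_𝐜 u - γ_𝐜 v = (u - v) / (j(u) j(v))` with `j(u) = cu + d`,
everything reduces to showing that `|j|` varies by a bounded factor on `I_a ∪ I_b`. This is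
clear if `c = 0`; otherwise the zero `-d/c` of `j` lies in the interior of `I_ē` (`e` the last
letter of `𝐜`), which is at distance at least `δ` from `I_a` and `I_b`: indeed `γ_𝐜` maps the
complement of that interior, `∞` included, into an interval, so `-d/c` cannot lie in it.
-/

open Topology OnePoint

def mobiusDen (g : SL2) (x : ℝ) : ℝ := g 1 0 * x + g 1 1

lemma mobiusOP_eq_smul (g : SL2) (x : OnePoint ℝ) :
    mobiusOP g x = Matrix.SpecialLinearGroup.toGL g • x := by
  cases x with
  | infty => rw [smul_infty_eq_ite]; rfl
  | coe x => rw [smul_some_eq_ite]; rfl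

lemma mobiusOP_mul (g h : SL2) (x : OnePoint ℝ) :
    mobiusOP (g * h) x = mobiusOP g (mobiusOP h x) := by
  simp only [mobiusOP_eq_smul, map_mul, mul_smul]

lemma mobiusOP_one (x : OnePoint ℝ) : mobiusOP 1 x = x := by
  simp only [mobiusOP_eq_smul, map_one, one_smul]

lemma mobiusOP_coe_eq_coe_iff {g : SL2} {x y : ℝ} :
    mobiusOP g x = y ↔ mobiusDen g x ≠ 0 ∧ mobius g x = y := by
  change (if mobiusDen g x = 0 then ∞ else ((mobius g x : ℝ) : OnePoint ℝ)) = y ↔ _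
  by_cases h : mobiusDen g x = 0 <;> simp [h]

lemma mobius_sub_mobius {g : SL2} {u v : ℝ} (hu : mobiusDen g u ≠ 0) (hv : mobiusDen g v ≠ 0) :
    mobius g u - mobius g v = (u - v) / (mobiusDen g u * mobiusDen g v) := by
  have hdet : g 0 0 * g 1 1 - g 0 1 * g 1 0 = 1 := by
    rw [← Matrix.det_fin_two]; exact g.det_coe
  unfold mobiusDen at *
  rw [mobius, mobius, div_sub_div _ _ hu hv]
  congr 1
  linear_combination (u - v) * hdet

lemma mobiusDen_eq_mul_sub_pole {g : SL2} (hg : g 1 0 ≠ 0) (u : ℝ) :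
    mobiusDen g u = g 1 0 * (u - mobiusPole g) := by
  rw [mobiusDen, mobiusPole]; field_simp; ring

lemma ivlen_le_of_forall_abs_sub_le {s : Set ℝ} {B : ℝ} (hB : 0 ≤ B)
    (h : ∀ x ∈ s, ∀ y ∈ s, |x - y| ≤ B) : ivlen s ≤ B :=
  ENNReal.toReal_le_of_le_ofReal hB <| (Real.volume_le_diam s).trans <|
    Metric.ediam_le fun x hx y hy => by
      rw [edist_dist, Real.dist_eq]; exact ENNReal.ofReal_le_ofReal (h x hx y hy)

lemma abs_sub_le_mul_abs_sub {w w' p δ R : ℝ} (hδ : 0 < δ) (hw'p : δ ≤ |w' - p|)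
    (hww' : |w - w'| ≤ R) : |w - p| ≤ (1 + R / δ) * |w' - p| := by
  have hR : R ≤ R / δ * |w' - p| := by
    rw [div_mul_eq_mul_div, le_div_iff₀ hδ]
    exact mul_le_mul_of_nonneg_left hw'p ((abs_nonneg _).trans hww')
  calc |w - p| ≤ |w - w'| + |w' - p| := abs_sub_le _ _ _
    _ ≤ R / δ * |w' - p| + |w' - p| := by linarith
    _ = (1 + R / δ) * |w' - p| := by ring

lemma abs_mobius_sub_le {g : SL2} {u v u₁ u₂ K L δ : ℝ}
    (hu : mobiusDen g u ≠ 0) (hv : mobiusDen g v ≠ 0)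
    (hu₁ : mobiusDen g u₁ ≠ 0) (hu₂ : mobiusDen g u₂ ≠ 0) (hK : 0 < K) (hδ : 0 < δ)
    (huv : δ ≤ |u - v|) (hu₁₂ : |u₁ - u₂| ≤ L)
    (hKu : |mobiusDen g u| ≤ K * |mobiusDen g u₁|) (hKv : |mobiusDen g v| ≤ K * |mobiusDen g u₂|) :
    |mobius g u₁ - mobius g u₂| ≤ L * K ^ 2 / δ * |mobius g u - mobius g v| := by
  have hL : 0 ≤ L := (abs_nonneg _).trans hu₁₂
  rw [mobius_sub_mobius hu₁ hu₂, mobius_sub_mobius hu hv, abs_div, abs_div, abs_mul, abs_mul]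
  have := abs_pos.2 hu; have := abs_pos.2 hv; have := abs_pos.2 hu₁; have := abs_pos.2 hu₂
  calc |u₁ - u₂| / (|mobiusDen g u₁| * |mobiusDen g u₂|)
      ≤ L / (|mobiusDen g u₁| * |mobiusDen g u₂|) := by gcongr
    _ = L * K ^ 2 / ((K * |mobiusDen g u₁|) * (K * |mobiusDen g u₂|)) := by
      field_simp
    _ ≤ L * K ^ 2 / (|mobiusDen g u| * |mobiusDen g v|) := by gcongr
    _ = L * K ^ 2 / δ * (δ / (|mobiusDen g u| * |mobiusDen g v|)) := by field_simp
    _ ≤ L * K ^ 2 / δ * (|u - v| / (|mobiusDen g u| * |mobiusDen g v|)) := by gcongr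

theorem List.exists_eq_append_cons_of_not_prefix {α : Type*} :
    ∀ {l m : List α}, ¬ l <+: m → ¬ m <+: l →
      ∃ c a b l' m', a ≠ b ∧ l = c ++ a :: l' ∧ m = c ++ b :: m'
  | [], _, hlm, _ => absurd List.nil_prefix hlm
  | _, [], _, hml => absurd List.nil_prefix hml
  | x :: l, y :: m, hlm, hml => by
    by_cases hxy : x = y
    · subst hxy
      obtain ⟨c, a, b, l', m', hab, rfl, rfl⟩ := List.exists_eq_append_cons_of_not_prefix
        (l := l) (m := m) (by simpa using hlm) (by simpa using hml)
      exact ⟨x :: c, a, b, l', m', hab, rfl, rfl⟩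
    · exact ⟨[], x, y, l, m, hxy, rfl, rfl⟩

namespace SchottkyData

variable {r : ℕ} (S : SchottkyData r)

abbrev I (a : Fin (2 * r)) : Set ℝ := Icc (S.ξ₀ a) (S.ξ₁ a)

/-- `ℝ ∪ {∞}` minus the interior of `I_ā`, which `γ_a` maps onto `I_a`. -/
def exterior (a : Fin (2 * r)) : Set (OnePoint ℝ) :=
  ((↑) '' Ioo (S.ξ₀ (bar a)) (S.ξ₁ (bar a)))ᶜ

lemma exists_pos_le_abs_sub :
    ∃ δ > 0, ∀ a b, a ≠ b → ∀ u ∈ S.I a, ∀ v ∈ S.I b, δ ≤ |u - v| := by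
  have hpair : ∀ p : Fin (2 * r) × Fin (2 * r), ∀ᶠ δ in 𝓝[>] (0 : ℝ),
      p.1 ≠ p.2 → ∀ u ∈ S.I p.1, ∀ v ∈ S.I p.2, δ ≤ |u - v| := by
    rintro ⟨a, b⟩
    by_cases hab : a = b
    · exact .of_forall fun _ h => absurd hab h
    obtain ⟨δ, hδ, hdisj⟩ := (S.hdisj a b hab).exists_thickenings isCompact_Icc isClosed_Icc
    filter_upwards [Ioc_mem_nhdsGT hδ] with ε hε _ u hu v hv
    refine hε.2.trans <| not_lt.1 fun huv =>
      hdisj.ne_of_mem ?_ (Metric.self_subset_thickening hδ _ hv) rfl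
    exact Metric.mem_thickening_iff.2 ⟨u, hu, by rwa [dist_comm, Real.dist_eq]⟩
  obtain ⟨δ, h, hδ⟩ := ((Filter.eventually_all.2 hpair).and self_mem_nhdsWithin).exists
  exact ⟨δ, hδ, fun a b hab => h (a, b) hab⟩

lemma exists_pos_abs_sub_le : ∃ R > 0, ∀ a b, ∀ u ∈ S.I a, ∀ v ∈ S.I b, |u - v| ≤ R := by
  obtain ⟨R, hR⟩ := Metric.isBounded_iff.1
    (isCompact_iUnion fun a => isCompact_Icc (a := S.ξ₀ a) (b := S.ξ₁ a)).isBounded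
  exact ⟨max R 1, by positivity, fun a b u hu v hv =>
    (hR (mem_iUnion_of_mem a hu) (mem_iUnion_of_mem b hv)).trans (le_max_left _ _)⟩

lemma coe_image_I_subset_exterior {a b : Fin (2 * r)} (hab : b ≠ bar a) :
    (↑) '' S.I b ⊆ S.exterior a := by
  rintro _ ⟨u, hu, rfl⟩ ⟨v, hv, hvu⟩
  exact (S.hdisj b (bar a) hab).ne_of_mem hu (Ioo_subset_Icc_self hv) (coe_injective hvu).symm

lemma mapsTo_γ (a : Fin (2 * r)) : MapsTo (mobiusOP (S.γ a)) (S.exterior a) ((↑) '' S.I a) := by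
  rw [← S.hmap a, exterior, compl_eq_univ_sdiff]
  exact mapsTo_image _ _

lemma wordγ_nil : S.wordγ [] = 1 := rfl

lemma wordγ_cons (a : Fin (2 * r)) (l : List (Fin (2 * r))) :
    S.wordγ (a :: l) = S.γ a * S.wordγ l := by
  simp [wordγ]

lemma wordγ_append (l m : List (Fin (2 * r))) : S.wordγ (l ++ m) = S.wordγ l * S.wordγ m := by
  simp [wordγ]

lemma mapsTo_wordγ_exterior {a : Fin (2 * r)} {l : List (Fin (2 * r))} (hw : S.IsWord (a :: l)) :
    MapsTo (mobiusOP (S.wordγ (a :: l))) (S.exterior ((a :: l).getLast (List.cons_ne_nil a l)))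
      ((↑) '' S.I a) := by
  induction l generalizing a with
  | nil => simpa [wordγ] using S.mapsTo_γ a
  | cons b l ih =>
    obtain ⟨hba, hw⟩ := List.isChain_cons_cons.1 hw
    rw [List.getLast_cons_cons, wordγ_cons, funext (mobiusOP_mul _ _)]
    exact (S.mapsTo_γ a).comp ((ih hw).mono_right (S.coe_image_I_subset_exterior hba))

lemma mapsTo_wordγ {l : List (Fin (2 * r))} {e : Fin (2 * r)} (hw : S.IsWord (l ++ [e])) :
    MapsTo (mobiusOP (S.wordγ l)) ((↑) '' S.I e) ((↑) '' S.I ((l ++ [e]).head (by simp))) := by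
  cases l with
  | nil =>
    rw [wordγ_nil, funext mobiusOP_one]
    exact mapsTo_id _
  | cons a l =>
    obtain ⟨hw, -, hlast⟩ := List.isChain_append.1 hw
    refine (S.mapsTo_wordγ_exterior hw).mono_left (S.coe_image_I_subset_exterior ?_)
    exact hlast _ (List.getLast?_eq_some_getLast _) _ rfl

lemma wordI_append_singleton (l : List (Fin (2 * r))) (e : Fin (2 * r)) :
    S.wordI (l ++ [e]) = mobius (S.wordγ l) '' S.I e := by
  simp [wordI]

lemma mobiusDen_wordγ_ne_zero {l : List (Fin (2 * r))} {e : Fin (2 * r)} (hw : S.IsWord (l ++ [e]))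
    {u : ℝ} (hu : u ∈ S.I e) : mobiusDen (S.wordγ l) u ≠ 0 := by
  obtain ⟨w, -, hw⟩ := S.mapsTo_wordγ hw (mem_image_of_mem _ hu)
  exact (mobiusOP_coe_eq_coe_iff.1 hw.symm).1

lemma exists_mem_I_mobius_eq {l t : List (Fin (2 * r))} {a : Fin (2 * r)}
    (hw : S.IsWord (l ++ a :: t)) {x : ℝ} (hx : x ∈ S.wordI (l ++ a :: t)) :
    ∃ u ∈ S.I a, mobius (S.wordγ l) u = x := by
  obtain ⟨m, e, hm⟩ : ∃ m e, a :: t = m ++ [e] :=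
    ⟨_, _, (List.dropLast_append_getLast (List.cons_ne_nil a t)).symm⟩
  have hme : S.IsWord (m ++ [e]) := hm ▸ (List.isChain_append.1 hw).2.1
  have hma : (m ++ [e]).head (by simp) = a := by simp [← hm]
  rw [hm, ← List.append_assoc] at hw hx
  rw [wordI_append_singleton] at hx
  obtain ⟨u₀, hu₀, rfl⟩ := hx
  obtain ⟨u, hu, hmu⟩ := S.mapsTo_wordγ hme (mem_image_of_mem _ hu₀)
  refine ⟨u, hma ▸ hu, (mobiusOP_coe_eq_coe_iff.1 ?_).2⟩
  rw [hmu, ← mobiusOP_mul, ← wordγ_append,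
    mobiusOP_coe_eq_coe_iff.2 ⟨S.mobiusDen_wordγ_ne_zero hw hu₀, rfl⟩]

lemma mobiusPole_wordγ_notMem_exterior {a : Fin (2 * r)} {l : List (Fin (2 * r))}
    (hw : S.IsWord (a :: l)) (hq : S.wordγ (a :: l) 1 0 ≠ 0) :
    (mobiusPole (S.wordγ (a :: l)) : OnePoint ℝ) ∉
      S.exterior ((a :: l).getLast (List.cons_ne_nil a l)) := by
  intro hp
  obtain ⟨w, -, hpw⟩ := S.mapsTo_wordγ_exterior hw hp
  exact (mobiusOP_coe_eq_coe_iff.1 hpw.symm).1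
    (by rw [mobiusDen_eq_mul_sub_pole hq, sub_self, mul_zero])

lemma abs_mobiusDen_wordγ_le {δ R : ℝ} (hδ : 0 < δ)
    (hsep : ∀ a b, a ≠ b → ∀ u ∈ S.I a, ∀ v ∈ S.I b, δ ≤ |u - v|)
    (hdiam : ∀ a b, ∀ u ∈ S.I a, ∀ v ∈ S.I b, |u - v| ≤ R)
    {l : List (Fin (2 * r))} {e e' : Fin (2 * r)} (he' : S.IsWord (l ++ [e']))
    {w w' : ℝ} (hw : w ∈ S.I e) (hw' : w' ∈ S.I e') :
    |mobiusDen (S.wordγ l) w| ≤ (1 + R / δ) * |mobiusDen (S.wordγ l) w'| := by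
  by_cases hq : S.wordγ l 1 0 = 0
  · have hR : 0 ≤ R := (abs_nonneg _).trans (hdiam e e w hw w hw)
    simp only [mobiusDen, hq, zero_mul, zero_add]
    exact le_mul_of_one_le_left (abs_nonneg _) (le_add_of_nonneg_right (by positivity))
  obtain _ | ⟨a, l⟩ := l
  · simp [wordγ_nil] at hq
  obtain ⟨hal, -, hlast⟩ := List.isChain_append.1 he'
  obtain ⟨p, hp, hpp⟩ := not_not.1 (S.mobiusPole_wordγ_notMem_exterior hal hq)
  rw [coe_injective hpp] at hp
  have he' : e' ≠ bar ((a :: l).getLast (List.cons_ne_nil a l)) :=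
    hlast _ (List.getLast?_eq_some_getLast _) _ rfl
  rw [mobiusDen_eq_mul_sub_pole hq, mobiusDen_eq_mul_sub_pole hq, abs_mul, abs_mul,
    mul_left_comm]
  exact mul_le_mul_of_nonneg_left (abs_sub_le_mul_abs_sub hδ
    (hsep e' _ he' w' hw' _ (Ioo_subset_Icc_self hp)) (hdiam e e' w hw w' hw')) (abs_nonneg _)

lemma ivlen_wordI_le {δ R : ℝ} (hδ : 0 < δ)
    (hsep : ∀ a b, a ≠ b → ∀ u ∈ S.I a, ∀ v ∈ S.I b, δ ≤ |u - v|)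
    (hdiam : ∀ a b, ∀ u ∈ S.I a, ∀ v ∈ S.I b, |u - v| ≤ R)
    {l t t' : List (Fin (2 * r))} {a b : Fin (2 * r)} (hat : S.IsWord (l ++ a :: t))
    (hbt' : S.IsWord (l ++ b :: t')) (hab : a ≠ b) {u v : ℝ} (hu : u ∈ S.I a) (hv : v ∈ S.I b) :
    ivlen (S.wordI (l ++ a :: t)) ≤
      R * (1 + R / δ) ^ 2 / δ * |mobius (S.wordγ l) u - mobius (S.wordγ l) v| := by
  have ha : S.IsWord (l ++ [a]) := hat.prefix ⟨t, by simp⟩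
  have hb : S.IsWord (l ++ [b]) := hbt'.prefix ⟨t', by simp⟩
  have hR : 0 ≤ R := (abs_nonneg _).trans (hdiam a a u hu u hu)
  refine ivlen_le_of_forall_abs_sub_le (by positivity) fun z₁ hz₁ z₂ hz₂ => ?_
  obtain ⟨u₁, hu₁, rfl⟩ := S.exists_mem_I_mobius_eq hat hz₁
  obtain ⟨u₂, hu₂, rfl⟩ := S.exists_mem_I_mobius_eq hat hz₂
  exact abs_mobius_sub_le (S.mobiusDen_wordγ_ne_zero ha hu) (S.mobiusDen_wordγ_ne_zero hb hv)
    (S.mobiusDen_wordγ_ne_zero ha hu₁) (S.mobiusDen_wordγ_ne_zero ha hu₂) (by positivity) hδ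
    (hsep a b hab u hu v hv) (hdiam a a u₁ hu₁ u₂ hu₂)
    (S.abs_mobiusDen_wordγ_le hδ hsep hdiam ha hu hu₁)
    (S.abs_mobiusDen_wordγ_le hδ hsep hdiam ha hv hu₂)

end SchottkyData

/-- **Separation:** there is `C_Γ > 0` depending only on the Schottky data such that if
neither of the nonempty words `𝐚, 𝐛` is a prefix of the other, then
`|x − y| ≥ C_Γ⁻¹ max(|I_𝐚|, |I_𝐛|)` for all `x ∈ I_𝐚`, `y ∈ I_𝐛`. -/
theorem separation (r : ℕ) (S : SchottkyData r) :
    ∃ C > (0 : ℝ), ∀ l m : List (Fin (2 * r)), l ≠ [] → m ≠ [] →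
      S.IsWord l → S.IsWord m → ¬ l <+: m → ¬ m <+: l →
      ∀ x ∈ S.wordI l, ∀ y ∈ S.wordI m,
        C⁻¹ * max (ivlen (S.wordI l)) (ivlen (S.wordI m)) ≤ |x - y| := by
  obtain ⟨δ, hδ, hsep⟩ := S.exists_pos_le_abs_sub
  obtain ⟨R, hR, hdiam⟩ := S.exists_pos_abs_sub_le
  refine ⟨R * (1 + R / δ) ^ 2 / δ, by positivity, ?_⟩
  intro l m _ _ hl hm hlm hml x hx y hy
  obtain ⟨c, a, b, l', m', hab, rfl, rfl⟩ := List.exists_eq_append_cons_of_not_prefix hlm hml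
  obtain ⟨u, hu, rfl⟩ := S.exists_mem_I_mobius_eq hl hx
  obtain ⟨v, hv, rfl⟩ := S.exists_mem_I_mobius_eq hm hy
  rw [inv_mul_le_iff₀ (by positivity), max_le_iff]
  refine ⟨S.ivlen_wordI_le hδ hsep hdiam hl hm hab hu hv, ?_⟩
  rw [abs_sub_comm]
  exact S.ivlen_wordI_le hδ hsep hdiam hm hl hab.symm hv hu
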